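/- Let W be an N×N real matrix with nonnegative entries and α > 0 with α·ρ(W) < 1, let z ∈ ℝ^N have nonnegative entries with at least one strictly positive entry, and let Q be an N×N real symmetric matrix with nonnegative entries, Q·1 = 1, and such that there exists λ ∈ [0,1) with ‖Qv‖ ≤ λ‖v‖ for all v with 1ᵀv = 0. Define c(t+1) = α Wᵀ c(t) + z and c̄(t+1) = Q c̄(t) + (c(t+1) − c(t)) with initial conditions c(0) = c̄(0) = z. Then there exists t* such that for all t > t*, every component of c̄(t) is strictly positive. -/

import Mathlib

/-- The Euclidean norm of a vector in `ℝ^N`. -/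
noncomputable def eNorm {N : ℕ} (v : Fin N → ℝ) : ℝ :=
  Real.sqrt (∑ i, v i ^ 2)

/-- The spectral radius of a real square matrix: the supremum of the absolute
values of the (complex) eigenvalues of its complexification. -/
noncomputable def specRad {N : ℕ} (W : Matrix (Fin N) (Fin N) ℝ) : ℝ :=
  sSup {r : ℝ | ∃ μ ∈ spectrum ℂ (W.map (Complex.ofReal · )), r = ‖μ‖}

open Filter Topology Matrix
open scoped ENNReal NNReal

section Helpers

lemma eNorm_eq_norm' {N : ℕ} (v : Fin N → ℝ) :
    eNorm v = ‖(WithLp.equiv 2 (Fin N → ℝ)).symm v‖ := by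
  rw [EuclideanSpace.norm_eq]
  unfold eNorm
  congr 1
  refine Finset.sum_congr rfl fun i _ => ?_
  show v i ^ 2 = ‖v i‖ ^ 2
  rw [Real.norm_eq_abs, sq_abs]

lemma eNorm_nonneg' {N : ℕ} (v : Fin N → ℝ) : 0 ≤ eNorm v := Real.sqrt_nonneg _

lemma abs_le_eNorm' {N : ℕ} (v : Fin N → ℝ) (i : Fin N) : |v i| ≤ eNorm v := by
  rw [← Real.sqrt_sq_eq_abs]
  exact Real.sqrt_le_sqrt (Finset.single_le_sum (fun j _ => sq_nonneg (v j)) (Finset.mem_univ i))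

lemma eNorm_add_le' {N : ℕ} (u v : Fin N → ℝ) : eNorm (u + v) ≤ eNorm u + eNorm v := by
  simp only [eNorm_eq_norm']
  have h : (WithLp.equiv 2 (Fin N → ℝ)).symm (u + v)
      = (WithLp.equiv 2 (Fin N → ℝ)).symm u + (WithLp.equiv 2 (Fin N → ℝ)).symm v := rfl
  rw [h]
  exact norm_add_le _ _

lemma eNorm_smul' {N : ℕ} (c : ℝ) (v : Fin N → ℝ) : eNorm (c • v) = |c| * eNorm v := by
  simp only [eNorm_eq_norm']
  have h : (WithLp.equiv 2 (Fin N → ℝ)).symm (c • v)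
      = c • (WithLp.equiv 2 (Fin N → ℝ)).symm v := rfl
  rw [h, norm_smul, Real.norm_eq_abs]

lemma eNorm_le_of_bound' {N : ℕ} (v : Fin N → ℝ) (B : ℝ) (hB : 0 ≤ B)
    (h : ∀ i, |v i| ≤ B) : eNorm v ≤ Real.sqrt N * B := by
  have h1 : (∑ i, v i ^ 2) ≤ ∑ _i : Fin N, B ^ 2 := by
    refine Finset.sum_le_sum fun i _ => ?_
    rw [← sq_abs]
    exact pow_le_pow_left₀ (abs_nonneg _) (h i) 2
  calc eNorm v ≤ Real.sqrt (∑ _i : Fin N, B ^ 2) := Real.sqrt_le_sqrt h1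
    _ = Real.sqrt (N * B ^ 2) := by rw [Finset.sum_const, Finset.card_univ, Fintype.card_fin,
        nsmul_eq_mul]
    _ = Real.sqrt N * B := by
        rw [Real.sqrt_mul (Nat.cast_nonneg N), Real.sqrt_sq hB]

lemma abs_sum_le_eNorm' {N : ℕ} (v : Fin N → ℝ) : |∑ i, v i| ≤ N * eNorm v := by
  calc |∑ i, v i| ≤ ∑ i, |v i| := Finset.abs_sum_le_sum_abs _ _
    _ ≤ ∑ _i : Fin N, eNorm v := Finset.sum_le_sum fun i _ => abs_le_eNorm' v i
    _ = N * eNorm v := by rw [Finset.sum_const, Finset.card_univ, Fintype.card_fin, nsmul_eq_mul]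

lemma eNorm_one' {N : ℕ} : eNorm (fun _ : Fin N => (1:ℝ)) = Real.sqrt N := by
  unfold eNorm
  simp

lemma seq_eventually_small' (lam : ℝ) (hlam0 : 0 ≤ lam) (hlam1 : lam < 1)
    (u a : ℕ → ℝ) (hu0 : ∀ t, 0 ≤ u t)
    (ha : Tendsto a atTop (𝓝 0))
    (hrec : ∀ t, u (t + 1) ≤ lam * u t + a t)
    (ε : ℝ) (hε : 0 < ε) : ∃ T, ∀ t, T ≤ t → u t < ε := by
  have hev : ∀ᶠ t in atTop, a t < (1 - lam) * ε / 2 :=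
    ha.eventually_lt_const (show (0:ℝ) < (1 - lam) * ε / 2 by nlinarith)
  obtain ⟨T0, hT0⟩ := eventually_atTop.mp hev
  have key : ∀ k, u (T0 + k) ≤ lam ^ k * u T0 + ε / 2 := by
    intro k
    induction k with
    | zero => simp; nlinarith
    | succ k ih =>
        have h1 := hrec (T0 + k)
        have h2 := hT0 (T0 + k) (Nat.le_add_right _ _)
        have heq : T0 + (k + 1) = (T0 + k) + 1 := by ring
        rw [heq]
        calc u ((T0 + k) + 1) ≤ lam * u (T0 + k) + a (T0 + k) := h1
          _ ≤ lam * (lam ^ k * u T0 + ε / 2) + (1 - lam) * ε / 2 := by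
              have := hu0 (T0 + k)
              nlinarith [mul_le_mul_of_nonneg_left ih hlam0]
          _ ≤ lam ^ (k + 1) * u T0 + ε / 2 := by ring_nf; nlinarith
  obtain ⟨K, hK⟩ := exists_pow_lt_of_lt_one
    (show (0:ℝ) < ε / (2 * (u T0 + 1)) by have := hu0 T0; apply div_pos hε; nlinarith) hlam1
  refine ⟨T0 + K, fun t ht => ?_⟩
  obtain ⟨k, rfl⟩ := Nat.exists_eq_add_of_le ht
  have hkK : K ≤ K + k := Nat.le_add_right _ _
  have hpow : lam ^ (K + k) ≤ lam ^ K := pow_le_pow_of_le_one hlam0 hlam1.le hkK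
  have h2 := key (K + k)
  have h3 : lam ^ (K + k) * u T0 < ε / 2 := by
    have hu := hu0 T0
    have hle : lam ^ (K + k) * u T0 ≤ lam ^ K * u T0 :=
      mul_le_mul_of_nonneg_right hpow hu
    have h4 : lam ^ K * u T0 < ε / (2 * (u T0 + 1)) * (u T0 + 1) := by
      have hKnn : 0 ≤ lam ^ K := pow_nonneg hlam0 K
      nlinarith
    have h5 : ε / (2 * (u T0 + 1)) * (u T0 + 1) = ε / 2 := by
      have := hu0 T0
      field_simp
    nlinarith
  have heq : T0 + K + k = T0 + (K + k) := by ring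
  rw [heq]
  nlinarith

lemma spectrum_transpose' {N : ℕ} (M : Matrix (Fin N) (Fin N) ℂ) :
    spectrum ℂ Mᵀ = spectrum ℂ M := by
  ext μ
  simp only [spectrum.mem_iff, Algebra.algebraMap_eq_smul_one, not_iff_not]
  have h : μ • (1 : Matrix (Fin N) (Fin N) ℂ) - Mᵀ = (μ • 1 - M)ᵀ := by
    rw [Matrix.transpose_sub, Matrix.transpose_smul, Matrix.transpose_one]
  rw [h, Matrix.isUnit_iff_isUnit_det, Matrix.det_transpose, ← Matrix.isUnit_iff_isUnit_det]

section Norms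
attribute [local instance] Matrix.linftyOpNormedRing Matrix.linftyOpNormedAlgebra

lemma pow_norm_tendsto_zero' {A : Type*} [NormedRing A] [NormedAlgebra ℂ A] [CompleteSpace A]
    (a : A) (h : spectralRadius ℂ a < 1) :
    Tendsto (fun n => ‖a ^ n‖) atTop (𝓝 0) := by
  obtain ⟨r, hr0, hr1, hr2⟩ := ENNReal.lt_iff_exists_real_btwn.mp h
  have hrlt1 : r < 1 := ENNReal.ofReal_lt_one.mp hr2
  have hrpos : 0 < r := by
    by_contra hc
    push_neg at hc
    simp [ENNReal.ofReal_eq_zero.mpr hc] at hr1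
  have hge := spectrum.pow_nnnorm_pow_one_div_tendsto_nhds_spectralRadius a
  have hev : ∀ᶠ (n : ℕ) in atTop, (‖a ^ n‖₊ : ℝ≥0∞) ^ (1/(n:ℝ)) < ENNReal.ofReal r :=
    hge.eventually_lt_const hr1
  have hev2 : ∀ᶠ (n : ℕ) in atTop, ‖a ^ n‖ ≤ r ^ n := by
    filter_upwards [hev, eventually_ge_atTop 1] with n hn hn1
    have hne : (n : ℝ) ≠ 0 := by positivity
    have hlt := ENNReal.rpow_lt_rpow hn (by positivity : (0:ℝ) < (n:ℝ))
    rw [← ENNReal.rpow_mul, one_div_mul_cancel hne, ENNReal.rpow_one,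
      ENNReal.ofReal_rpow_of_pos hrpos, Real.rpow_natCast,
      ← ENNReal.ofReal_coe_nnreal, coe_nnnorm] at hlt
    exact le_of_lt ((ENNReal.ofReal_lt_ofReal_iff (by positivity)).mp hlt)
  refine squeeze_zero' (Eventually.of_forall fun n => norm_nonneg _) hev2 ?_
  exact tendsto_pow_atTop_nhds_zero_of_lt_one hr0 hrlt1

lemma entry_norm_le_linfty {N : ℕ} (M : Matrix (Fin N) (Fin N) ℂ) (i j : Fin N) :
    ‖M i j‖ ≤ ‖M‖ := by
  rw [Matrix.linfty_opNorm_def]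
  have h1 : ‖M i j‖₊ ≤ ∑ k, ‖M i k‖₊ :=
    Finset.single_le_sum (f := fun k => ‖M i k‖₊) (fun k _ => zero_le) (Finset.mem_univ j)
  have h2 : (∑ k, ‖M i k‖₊) ≤ (Finset.univ : Finset (Fin N)).sup fun i => ∑ j, ‖M i j‖₊ :=
    Finset.le_sup (f := fun i => ∑ j, ‖M i j‖₊) (Finset.mem_univ i)
  exact_mod_cast h1.trans h2

lemma specRadius_lt_one {N : ℕ} (W : Matrix (Fin N) (Fin N) ℝ)
    (α : ℝ) (hα : 0 < α) (hspec : α * specRad W < 1) :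
    spectralRadius ℂ ((α • Wᵀ).map (Complex.ofReal ·)) < 1 := by
  set S := spectrum ℂ (W.map (Complex.ofReal ·)) with hS
  have hMc : ((α • Wᵀ).map (Complex.ofReal ·)) = (α : ℂ) • (W.map (Complex.ofReal ·))ᵀ := by
    ext i j
    simp [Matrix.map_apply, Matrix.transpose_apply, Complex.ofReal_mul]
  have hbdd : BddAbove {r : ℝ | ∃ μ ∈ S, r = ‖μ‖} := by
    have he : {r : ℝ | ∃ μ ∈ S, r = ‖μ‖} = (‖·‖) '' S := by
      ext r
      simp only [Set.mem_setOf_eq, Set.mem_image]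
      constructor
      · rintro ⟨μ, hμ, rfl⟩; exact ⟨μ, hμ, rfl⟩
      · rintro ⟨μ, hμ, rfl⟩; exact ⟨μ, hμ, rfl⟩
    rw [he]
    exact ((Matrix.finite_spectrum _).image _).bddAbove
  have hsub : ∀ ν ∈ spectrum ℂ ((α • Wᵀ).map (Complex.ofReal ·)), ∃ μ ∈ S, ν = (α:ℂ) * μ := by
    intro ν hν
    rw [hMc] at hν
    set u : ℂˣ := Units.mk0 (α:ℂ) (by exact_mod_cast hα.ne') with hu
    have husmul : (α : ℂ) • (W.map (Complex.ofReal ·))ᵀ = u • (W.map (Complex.ofReal ·))ᵀ := rfl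
    rw [husmul, spectrum.unit_smul_eq_smul, spectrum_transpose'] at hν
    obtain ⟨μ, hμ, rfl⟩ := hν
    exact ⟨μ, hμ, by simp [hu, Units.smul_def]⟩
  have hle : spectralRadius ℂ ((α • Wᵀ).map (Complex.ofReal ·))
      ≤ ENNReal.ofReal (α * specRad W) := by
    refine iSup₂_le fun ν hν => ?_
    obtain ⟨μ, hμ, rfl⟩ := hsub ν hν
    have h1 : ‖(α:ℂ) * μ‖ = α * ‖μ‖ := by
      rw [norm_mul, Complex.norm_real, Real.norm_eq_abs, abs_of_pos hα]
    have h2 : ‖μ‖ ≤ specRad W := le_csSup hbdd ⟨μ, hμ, rfl⟩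
    calc ((‖(α:ℂ) * μ‖₊ : ℝ≥0) : ℝ≥0∞) = ENNReal.ofReal ‖(α:ℂ) * μ‖ :=
          (ofReal_norm _).symm
      _ ≤ ENNReal.ofReal (α * specRad W) := by
          rw [h1]
          exact ENNReal.ofReal_le_ofReal (mul_le_mul_of_nonneg_left h2 hα.le)
  exact lt_of_le_of_lt hle (ENNReal.ofReal_lt_one.mpr hspec)

lemma pow_entry_tendsto_zero {N : ℕ} (W : Matrix (Fin N) (Fin N) ℝ) (α : ℝ) (hα : 0 < α)
    (hspec : α * specRad W < 1) :
    ∃ g : ℕ → ℝ, Tendsto g atTop (𝓝 0) ∧ ∀ n i j, |((α • Wᵀ) ^ n) i j| ≤ g n := by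
  set Mc := (α • Wᵀ).map (Complex.ofReal ·) with hMc
  refine ⟨fun n => ‖Mc ^ n‖, pow_norm_tendsto_zero' Mc (specRadius_lt_one W α hα hspec), ?_⟩
  intro n i j
  have hmap : Mc ^ n = ((α • Wᵀ) ^ n).map (Complex.ofReal ·) := by
    rw [show Mc = Complex.ofRealHom.mapMatrix (α • Wᵀ) from rfl, ← map_pow,
      RingHom.mapMatrix_apply]
    rfl
  have h := entry_norm_le_linfty (Mc ^ n) i j
  have h2 : ‖(Mc ^ n) i j‖ = |((α • Wᵀ) ^ n) i j| := by
    rw [hmap, Matrix.map_apply, Complex.norm_real, Real.norm_eq_abs]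
  rw [h2] at h
  exact h

end Norms
end Helpers

/-- Eventual positivity of the average-centrality estimates: with `z`
nonnegative and having at least one strictly positive component, the cascade
`c(t+1) = α Wᵀ c(t) + z`, `c̄(t+1) = Q c̄(t) + Δc(t+1)` started from
`c(0) = c̄(0) = z` eventually yields strictly positive `c̄(t)` entrywise. -/


theorem average_centrality_eventually_positive
    {N : ℕ} (W : Matrix (Fin N) (Fin N) ℝ)
    (hWnn : ∀ i j, 0 ≤ W i j)
    (α : ℝ) (hα : 0 < α) (hspec : α * specRad W < 1)
    (z : Fin N → ℝ) (hznn : ∀ i, 0 ≤ z i) (hzpos : ∃ i, 0 < z i)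
    (Q : Matrix (Fin N) (Fin N) ℝ)
    (hQnn : ∀ i j, 0 ≤ Q i j)
    (hQsymm : Q.transpose = Q)
    (hQone : Q.mulVec (fun _ => (1 : ℝ)) = fun _ => (1 : ℝ))
    (lam : ℝ) (hlam0 : 0 ≤ lam) (hlam1 : lam < 1)
    (hcontract : ∀ v : Fin N → ℝ, (∑ i, v i) = 0 →
      eNorm (Q.mulVec v) ≤ lam * eNorm v)
    (c cbar : ℕ → Fin N → ℝ)
    (hc0 : c 0 = z) (hcbar0 : cbar 0 = z)
    (hc : ∀ t, c (t + 1) = α • (W.transpose.mulVec (c t)) + z)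
    (hcbar : ∀ t, cbar (t + 1) = Q.mulVec (cbar t) + (c (t + 1) - c t)) :
    ∃ tstar : ℕ, ∀ t, tstar < t → ∀ i, 0 < cbar t i := by
  classical
  obtain ⟨i0, hi0⟩ := hzpos
  have hN : 0 < N := i0.pos
  have hNR : (0:ℝ) < N := by exact_mod_cast hN
  set A : Matrix (Fin N) (Fin N) ℝ := α • Wᵀ with hA
  have hAnn : ∀ i j, 0 ≤ A i j := by
    intro i j
    have : A i j = α * W j i := rfl
    rw [this]
    exact mul_nonneg hα.le (hWnn j i)
  have hcA : ∀ t, c (t+1) = A.mulVec (c t) + z := by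
    intro t
    rw [hc t, hA, Matrix.smul_mulVec]
  have hmulVec_nn : ∀ (x : Fin N → ℝ), (∀ i, 0 ≤ x i) → ∀ i, 0 ≤ A.mulVec x i := by
    intro x hx i
    show 0 ≤ ∑ j, A i j * x j
    apply Finset.sum_nonneg
    intro j _
    exact mul_nonneg (hAnn i j) (hx j)
  have hcnn : ∀ t i, 0 ≤ c t i := by
    intro t
    induction t with
    | zero => rw [hc0]; exact hznn
    | succ t ih =>
        rw [hcA t]
        intro i
        exact add_nonneg (hmulVec_nn _ ih i) (hznn i)
  set d : ℕ → Fin N → ℝ := fun t => c (t+1) - c t with hd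
  have hdrec : ∀ t, d (t+1) = A.mulVec (d t) := by
    intro t
    show c (t+2) - c (t+1) = A.mulVec (c (t+1) - c t)
    rw [hcA (t+1), hcA t, Matrix.mulVec_sub]
    abel
  have hdpow : ∀ t, d t = (A ^ (t+1)).mulVec z := by
    intro t
    induction t with
    | zero =>
        show c 1 - c 0 = (A ^ 1).mulVec z
        rw [hcA 0, hc0, pow_one]
        abel
    | succ t ih =>
        rw [hdrec t, ih, Matrix.mulVec_mulVec, ← pow_succ']
  set S := ∑ i, z i with hSdef
  have hSpos : 0 < S := Finset.sum_pos' (fun i _ => hznn i) ⟨i0, Finset.mem_univ _, hi0⟩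
  have hsum_c : ∀ t, S ≤ ∑ i, c t i := by
    intro t
    cases t with
    | zero => rw [hc0]
    | succ t =>
        rw [hcA t]
        have h1 : ∑ i, (A.mulVec (c t) + z) i = (∑ i, A.mulVec (c t) i) + S := by
          simp [Finset.sum_add_distrib, hSdef]
        rw [h1]
        have h0 : 0 ≤ ∑ i, A.mulVec (c t) i :=
          Finset.sum_nonneg fun i _ => hmulVec_nn _ (hcnn t) i
        linarith
  have hQ' : ∀ i j, Q i j = Q j i := by
    intro i j
    conv_lhs => rw [← hQsymm]
    rfl
  have hQrow : ∀ i, ∑ j, Q i j = 1 := by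
    intro i
    have := congrFun hQone i
    simpa [Matrix.mulVec, dotProduct] using this
  have hQsum : ∀ x : Fin N → ℝ, ∑ i, Q.mulVec x i = ∑ j, x j := by
    intro x
    simp only [Matrix.mulVec, dotProduct]
    rw [Finset.sum_comm]
    refine Finset.sum_congr rfl fun j _ => ?_
    rw [← Finset.sum_mul]
    have hcol : ∑ i, Q i j = 1 := by
      rw [Finset.sum_congr rfl fun i (_ : i ∈ Finset.univ) => hQ' i j]
      exact hQrow j
    rw [hcol]
    ring
  have hsum_step : ∀ t, ∑ i, cbar (t+1) i = (∑ i, cbar t i) + ∑ i, d t i := by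
    intro t
    rw [hcbar t]
    simp only [Pi.add_apply]
    rw [Finset.sum_add_distrib, hQsum]
  have hsum_cbar : ∀ t, ∑ i, cbar t i = ∑ i, c t i := by
    intro t
    induction t with
    | zero => rw [hcbar0, hc0]
    | succ t ih =>
        rw [hsum_step t, ih]
        have : ∑ i, d t i = (∑ i, c (t+1) i) - ∑ i, c t i := by
          show ∑ i, (c (t+1) - c t) i = _
          simp [Finset.sum_sub_distrib]
        rw [this]
        ring
  set m : ℕ → ℝ := fun t => (∑ i, cbar t i) / N with hm
  set v : ℕ → Fin N → ℝ := fun t i => cbar t i - m t with hv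
  set w : ℕ → Fin N → ℝ := fun t i => d t i - (∑ j, d t j) / N with hw
  have hvsum : ∀ t, ∑ i, v t i = 0 := by
    intro t
    show ∑ i, (cbar t i - m t) = 0
    rw [Finset.sum_sub_distrib, Finset.sum_const, Finset.card_univ, Fintype.card_fin,
      nsmul_eq_mul, hm]
    field_simp
    ring
  have hQv : ∀ t i, Q.mulVec (v t) i = Q.mulVec (cbar t) i - m t := by
    intro t i
    show ∑ j, Q i j * (cbar t j - m t) = (∑ j, Q i j * cbar t j) - m t
    rw [show (∑ j, Q i j * (cbar t j - m t))
        = (∑ j, Q i j * cbar t j) - (∑ j, Q i j) * m t by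
      rw [Finset.sum_mul, ← Finset.sum_sub_distrib]
      exact Finset.sum_congr rfl fun j _ => by ring]
    rw [hQrow i, one_mul]
  have hmrec : ∀ t, m (t+1) = m t + (∑ j, d t j) / N := by
    intro t
    show (∑ i, cbar (t+1) i) / N = (∑ i, cbar t i) / N + (∑ j, d t j) / N
    rw [hsum_step t]
    ring
  have hvrec : ∀ t, v (t+1) = Q.mulVec (v t) + w t := by
    intro t
    funext i
    show cbar (t+1) i - m (t+1) = Q.mulVec (v t) i + (d t i - (∑ j, d t j) / N)
    rw [hQv t i, hmrec t, hcbar t]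
    show (Q.mulVec (cbar t) i + (c (t+1) - c t) i) - _ = _
    show (Q.mulVec (cbar t) i + d t i) - _ = _
    ring
  set useq : ℕ → ℝ := fun t => eNorm (v t) with hu
  set aseq : ℕ → ℝ := fun t => eNorm (w t) with haseq
  have hurec : ∀ t, useq (t+1) ≤ lam * useq t + aseq t := by
    intro t
    show eNorm (v (t+1)) ≤ lam * eNorm (v t) + eNorm (w t)
    rw [hvrec t]
    calc eNorm (Q.mulVec (v t) + w t) ≤ eNorm (Q.mulVec (v t)) + eNorm (w t) :=
          eNorm_add_le' _ _
      _ ≤ lam * eNorm (v t) + eNorm (w t) := by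
          have := hcontract (v t) (hvsum t)
          linarith
  -- decay of d
  obtain ⟨g, hg, hgb⟩ := pow_entry_tendsto_zero W α hα hspec
  have hgnn : ∀ n, 0 ≤ g n := fun n => le_trans (abs_nonneg _) (hgb n i0 i0)
  have hdbound : ∀ t i, |d t i| ≤ g (t+1) * S := by
    intro t i
    rw [hdpow t]
    show |∑ j, (A ^ (t+1)) i j * z j| ≤ g (t+1) * S
    calc |∑ j, (A ^ (t+1)) i j * z j| ≤ ∑ j, |(A ^ (t+1)) i j * z j| :=
          Finset.abs_sum_le_sum_abs _ _
      _ ≤ ∑ j, g (t+1) * z j := by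
          refine Finset.sum_le_sum fun j _ => ?_
          rw [abs_mul, abs_of_nonneg (hznn j)]
          exact mul_le_mul_of_nonneg_right (hgb (t+1) i j) (hznn j)
      _ = g (t+1) * S := by rw [← Finset.mul_sum]
  have hdnorm : ∀ t, eNorm (d t) ≤ Real.sqrt N * (g (t+1) * S) := by
    intro t
    exact eNorm_le_of_bound' _ _ (mul_nonneg (hgnn _) hSpos.le) (hdbound t)
  have hdtend : Tendsto (fun t => eNorm (d t)) atTop (𝓝 0) := by
    have hG : Tendsto (fun t => Real.sqrt N * (g (t+1) * S)) atTop (𝓝 0) := by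
      have h1 : Tendsto (fun t => g (t+1)) atTop (𝓝 0) :=
        hg.comp (tendsto_add_atTop_nat 1)
      have h2 := (h1.mul_const S).const_mul (Real.sqrt N)
      simpa using h2
    exact squeeze_zero (fun t => eNorm_nonneg' _) hdnorm hG
  have hwbound : ∀ t, aseq t ≤ (1 + Real.sqrt N) * eNorm (d t) := by
    intro t
    have hweq : w t = d t + (-((∑ j, d t j) / N)) • (fun _ : Fin N => (1:ℝ)) := by
      funext i
      show d t i - (∑ j, d t j) / N = d t i + -((∑ j, d t j) / N) * 1
      ring
    rw [haseq]
    show eNorm (w t) ≤ _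
    rw [hweq]
    calc eNorm (d t + (-((∑ j, d t j) / N)) • (fun _ : Fin N => (1:ℝ)))
        ≤ eNorm (d t) + eNorm ((-((∑ j, d t j) / N)) • (fun _ : Fin N => (1:ℝ))) :=
          eNorm_add_le' _ _
      _ = eNorm (d t) + |(∑ j, d t j) / N| * Real.sqrt N := by
          rw [eNorm_smul', eNorm_one', abs_neg]
      _ ≤ eNorm (d t) + eNorm (d t) * Real.sqrt N := by
          have h1 : |(∑ j, d t j) / N| ≤ eNorm (d t) := by
            rw [abs_div, abs_of_pos hNR]
            rw [div_le_iff₀ hNR]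
            calc |∑ j, d t j| ≤ N * eNorm (d t) := abs_sum_le_eNorm' _
              _ = eNorm (d t) * N := by ring
          have hsq : (0:ℝ) ≤ Real.sqrt N := Real.sqrt_nonneg _
          nlinarith
      _ = (1 + Real.sqrt N) * eNorm (d t) := by ring
  have hatend : Tendsto aseq atTop (𝓝 0) := by
    have hG := hdtend.const_mul (1 + Real.sqrt N)
    simp only [mul_zero] at hG
    exact squeeze_zero (fun t => eNorm_nonneg' _)
      (fun t => (hwbound t).trans_eq (by ring)) hG
  obtain ⟨T, hT⟩ := seq_eventually_small' lam hlam0 hlam1 useq aseq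
    (fun t => eNorm_nonneg' _) hatend hurec (S / N) (div_pos hSpos hNR)
  refine ⟨T, fun t ht i => ?_⟩
  have hut := hT t ht.le
  have hmt : S / N ≤ m t := by
    rw [hm]
    show S / N ≤ (∑ i, cbar t i) / N
    rw [hsum_cbar t]
    gcongr
    exact hsum_c t
  have habs : |v t i| ≤ useq t := abs_le_eNorm' _ _
  have hvi : -(useq t) ≤ v t i := by
    have := abs_le.mp habs
    exact this.1
  have hcbi : cbar t i = m t + v t i := by
    show cbar t i = m t + (cbar t i - m t)
    ring
  rw [hcbi]
  have : useq t < S / N := hut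
  linarith
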